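/- arXiv:2505.01525 — 2 statements merged into one kernel-verified Lean document; each statement's English description precedes it below -/
import Mathlib

section
/- The Boris rotation step preserves speed exactly: let b̂ ∈ ℝ³ be a unit vector and w ∈ ℝ, and given v⁻ ∈ ℝ³ define v' = v⁻ + v⁻ × (w b̂) and v⁺ = v⁻ + v' × (2w/(1+w²)) b̂. Then ‖v⁺‖ = ‖v⁻‖. -/
/-!
Write `c = v × b` and `d = c × b`, so that the Boris step is `v⁺ = v + t c + t w d` with
`t = 2w/(1+w²)`. The Gram matrix of `v, c, d` is explicit: `c` is orthogonal to `v`, `b` and `d`,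
`v ⬝ d = -|c|²` and `|d|² = |b|² |c|²`. Hence `|v⁺|² = |v|² + t (t (1 + w² |b|²) - 2w) |c|²`,
and the choice of `t` makes the bracket vanish when `|b| = 1`.
-/

open Matrix

section CrossProduct

variable {R : Type*} [CommRing R]

theorem dot_cross_cross_self (v b : Fin 3 → R) :
    v ⬝ᵥ v ⨯₃ b ⨯₃ b = -(v ⨯₃ b ⬝ᵥ v ⨯₃ b) := by
  rw [triple_product_permutation, ← cross_anticomm v b, dotProduct_neg]

theorem cross_dot_cross_self_of_dot_eq_zero {c b : Fin 3 → R} (h : c ⬝ᵥ b = 0) :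
    c ⨯₃ b ⬝ᵥ c ⨯₃ b = (b ⬝ᵥ b) * (c ⬝ᵥ c) := by
  rw [cross_dot_cross, h, dotProduct_comm b c, h]
  ring

def borisStep (b : Fin 3 → R) (w t : R) (v : Fin 3 → R) : Fin 3 → R :=
  v + (v + v ⨯₃ (w • b)) ⨯₃ (t • b)

theorem borisStep_eq (b : Fin 3 → R) (w t : R) (v : Fin 3 → R) :
    borisStep b w t v = v + t • v ⨯₃ b + (t * w) • v ⨯₃ b ⨯₃ b := by
  simp only [borisStep, map_add, map_smul, LinearMap.add_apply, LinearMap.smul_apply, smul_add,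
    smul_smul, add_assoc]

theorem borisStep_dot_self (b : Fin 3 → R) (w t : R) (v : Fin 3 → R) :
    borisStep b w t v ⬝ᵥ borisStep b w t v =
      v ⬝ᵥ v + t * (t * (1 + w ^ 2 * (b ⬝ᵥ b)) - 2 * w) * (v ⨯₃ b ⬝ᵥ v ⨯₃ b) := by
  have hcb : v ⨯₃ b ⬝ᵥ b = 0 := by rw [dotProduct_comm, dot_cross_self]
  have hvc : v ⬝ᵥ v ⨯₃ b = 0 := dot_self_cross v b
  have hcd : v ⨯₃ b ⬝ᵥ v ⨯₃ b ⨯₃ b = 0 := dot_self_cross _ b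
  have hvd := dot_cross_cross_self v b
  have hdd := cross_dot_cross_self_of_dot_eq_zero hcb
  rw [borisStep_eq]
  simp only [add_dotProduct, dotProduct_add, smul_dotProduct, dotProduct_smul, smul_eq_mul]
  rw [dotProduct_comm (v ⨯₃ b) v, dotProduct_comm (v ⨯₃ b ⨯₃ b) v,
    dotProduct_comm (v ⨯₃ b ⨯₃ b) (v ⨯₃ b), hvc, hcd, hvd, hdd]
  ring

theorem borisStep_dot_self_eq {b : Fin 3 → R} {w t : R} (h : t * (1 + w ^ 2 * (b ⬝ᵥ b)) = 2 * w)
    (v : Fin 3 → R) : borisStep b w t v ⬝ᵥ borisStep b w t v = v ⬝ᵥ v := by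
  rw [borisStep_dot_self, h, sub_self, mul_zero, zero_mul, add_zero]

end CrossProduct

/-- The Boris rotation step preserves speed: with `b̂` a unit vector, `w ∈ ℝ`,
`v' = v⁻ + v⁻ × (w b̂)` and `v⁺ = v⁻ + v' × ((2w/(1+w²)) b̂)`, one has `‖v⁺‖ = ‖v⁻‖`. -/
theorem boris_rotation_preserves_speed (b : Fin 3 → ℝ) (hb : b ⬝ᵥ b = 1) (w : ℝ)
    (vm : Fin 3 → ℝ) :
    Real.sqrt
        ((vm + crossProduct (vm + crossProduct vm (w • b)) ((2 * w / (1 + w ^ 2)) • b)) ⬝ᵥ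
          (vm + crossProduct (vm + crossProduct vm (w • b)) ((2 * w / (1 + w ^ 2)) • b))) =
      Real.sqrt (vm ⬝ᵥ vm) := by
  have ht : 2 * w / (1 + w ^ 2) * (1 + w ^ 2 * (b ⬝ᵥ b)) = 2 * w := by
    rw [hb, mul_one, div_mul_cancel₀]
    positivity
  exact congrArg Real.sqrt (borisStep_dot_self_eq ht vm)
end

section
/- With b̂ a unit vector, w = tan(θ/2) for θ ∈ (−π, π), and v⁻ ∈ ℝ³ perpendicular to b̂, the Boris update v⁺ = v⁻ + (v⁻ + v⁻ × (w b̂)) × (2w/(1+w²)) b̂ equals the rotation of v⁻ by angle θ about the axis b̂: v⁺ = cos θ · v⁻ − sin θ · (b̂ × v⁻). -/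
open Matrix

/-!
For `v ⊥ b̂` with `b̂` a unit vector, the vector triple product expansion gives
`(v × b̂) × b̂ = -v`, so the Boris update collapses to `(1 - s w) v - s (b̂ × v)` with
`s = 2w/(1+w²)`. For `w = tan(θ/2)` the half-angle formulas identify `s` with `sin θ` and
`1 - s w = (1 - w²)/(1 + w²)` with `cos θ` (the latter away from `cos θ = -1`).
-/

theorem cross_cross_self_of_dotProduct_eq_zero {R : Type*} [CommRing R] {b v : Fin 3 → R}
    (hb : b ⬝ᵥ b = 1) (hperp : v ⬝ᵥ b = 0) : v ⨯₃ b ⨯₃ b = -v := by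
  rw [cross_cross_eq_smul_sub_smul, hb, hperp, zero_smul, one_smul, zero_sub]

theorem boris_update_eq {R : Type*} [CommRing R] {b v : Fin 3 → R}
    (hb : b ⬝ᵥ b = 1) (hperp : v ⬝ᵥ b = 0) (w s : R) :
    v + (v + v ⨯₃ (w • b)) ⨯₃ (s • b) = (1 - s * w) • v - s • (b ⨯₃ v) := by
  simp only [map_smul, LinearMap.smul_apply, map_add, LinearMap.add_apply,
    cross_cross_self_of_dotProduct_eq_zero hb hperp]
  rw [← cross_anticomm b v]
  module

theorem Real.cos_ne_neg_one_of_mem_Ioo {θ : ℝ} (hθ : θ ∈ Set.Ioo (-Real.pi) Real.pi) :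
    Real.cos θ ≠ -1 := by
  have hpos : 0 < Real.cos (θ / 2) :=
    Real.cos_pos_of_mem_Ioo ⟨by linarith [hθ.1], by linarith [hθ.2]⟩
  have hhalf : Real.cos (θ / 2) ^ 2 = 1 / 2 + Real.cos θ / 2 := by
    rw [Real.cos_sq, mul_div_cancel₀ θ two_ne_zero]
  intro h
  nlinarith

/-- With `b̂` a unit vector, `w = tan(θ/2)` for `θ ∈ (−π, π)`, and `v⁻ ⊥ b̂`, the Boris
update `v⁺ = v⁻ + (v⁻ + v⁻ × (w b̂)) × ((2w/(1+w²)) b̂)` equals the rotation of `v⁻` by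
angle `θ` about `b̂`: `v⁺ = cos θ · v⁻ − sin θ · (b̂ × v⁻)`. -/
theorem boris_rotation_is_rotation (b : Fin 3 → ℝ) (hb : b ⬝ᵥ b = 1)
    (θ : ℝ) (hθ : θ ∈ Set.Ioo (-Real.pi) Real.pi)
    (vm : Fin 3 → ℝ) (hperp : vm ⬝ᵥ b = 0) :
    vm + crossProduct (vm + crossProduct vm (Real.tan (θ / 2) • b))
        ((2 * Real.tan (θ / 2) / (1 + Real.tan (θ / 2) ^ 2)) • b) =
      Real.cos θ • vm - Real.sin θ • crossProduct b vm := by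
  set w := Real.tan (θ / 2)
  have hsin : Real.sin θ = 2 * w / (1 + w ^ 2) :=
    Real.sin_eq_two_mul_tan_half_div_one_add_tan_half_sq θ
  have hcos : Real.cos θ = (1 - w ^ 2) / (1 + w ^ 2) :=
    Real.cos_eq_two_mul_tan_half_div_one_sub_tan_half_sq θ (Real.cos_ne_neg_one_of_mem_Ioo hθ)
  rw [boris_update_eq hb hperp, hsin, hcos]
  congr 2
  field_simp
  ring
end
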